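/- arXiv:2505.15319 — 2 statements merged into one kernel-verified Lean document; each statement's English description precedes it below -/
import Mathlib

section
/- Suppose M : (0,1] → ℝ is integrable with M ≥ 0, and satisfies for all μ ∈ (0,1]: M(μ) = 1 + 2U·M(μ)·μ·log(1+1/μ) + (ω₀/2)·μ·M(μ)·∫₀¹ M(μ')/(μ+μ') dμ', with 0 ≤ ω₀ and 0 ≤ U. Define R = 1 + 2U·∫₀¹ M(μ)·μ·log(1+1/μ) dμ and A₀ = ∫₀¹ M(μ) dμ. Then (ω₀/4)·A₀² − A₀ + R = 0. -/
/-!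
Integrate the equation for `M` over `(0, 1]`. The double integral
`∫∫ μ M(μ) M(μ') / (μ + μ')` is invariant under swapping `μ ↔ μ'`, and the two kernels
`μ / (μ + μ')` and `μ' / (μ + μ')` add up to `1`, so it equals `A₀² / 2`. The bounds
`μ / (μ + μ') ≤ 1` and `μ log (1 + 1/μ) ≤ 1` make every term integrable as soon as `M` is.
-/

open MeasureTheory Set

section Symmetrization

variable {μ : Measure ℝ} {f : ℝ → ℝ}

lemma ae_prod_pos (hpos : ∀ᵐ x ∂μ, 0 < x) : ∀ᵐ p ∂μ.prod μ, 0 < p.1 ∧ 0 < p.2 :=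
  (Measure.quasiMeasurePreserving_fst.ae hpos).and (Measure.quasiMeasurePreserving_snd.ae hpos)

lemma integrable_mul_div_add_prod (hpos : ∀ᵐ x ∂μ, 0 < x) (hf : Integrable f μ) :
    Integrable (fun p : ℝ × ℝ => p.1 * f p.1 * (f p.2 / (p.1 + p.2))) (μ.prod μ) := by
  have hweight : ∀ᵐ p ∂μ.prod μ, ‖p.1 / (p.1 + p.2)‖ ≤ 1 := by
    filter_upwards [ae_prod_pos hpos] with p ⟨h1, h2⟩
    rw [Real.norm_of_nonneg (by positivity), div_le_one (by positivity)]
    linarith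
  refine ((hf.mul_prod hf).bdd_mul ?_ hweight).congr (ae_of_all _ fun p => by ring)
  exact (measurable_fst.div (measurable_fst.add measurable_snd)).aestronglyMeasurable

variable [SFinite μ]

lemma integral_mul_integral_div_add_eq_sq_div_two (hpos : ∀ᵐ x ∂μ, 0 < x) (hf : Integrable f μ) :
    ∫ x, x * f x * ∫ y, f y / (x + y) ∂μ ∂μ = (∫ x, f x ∂μ) ^ 2 / 2 := by
  set F : ℝ × ℝ → ℝ := fun p => p.1 * f p.1 * (f p.2 / (p.1 + p.2))
  have hF : Integrable F (μ.prod μ) := integrable_mul_div_add_prod hpos hf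
  have hsym : ∀ᵐ p ∂μ.prod μ, F p + F p.swap = f p.1 * f p.2 := by
    filter_upwards [ae_prod_pos hpos] with p ⟨h1, h2⟩
    simp only [F, Prod.fst_swap, Prod.snd_swap]
    field_simp
    ring
  have h2F : 2 * ∫ p, F p ∂μ.prod μ = (∫ x, f x ∂μ) ^ 2 := by
    calc 2 * ∫ p, F p ∂μ.prod μ = ∫ p, F p ∂μ.prod μ + ∫ p, (F ∘ Prod.swap) p ∂μ.prod μ := by
          rw [two_mul, Function.comp_def, integral_prod_swap]
      _ = ∫ p, f p.1 * f p.2 ∂μ.prod μ := by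
          rw [← integral_add hF hF.swap]
          exact integral_congr_ae hsym
      _ = (∫ x, f x ∂μ) ^ 2 := by rw [integral_prod_mul, sq]
  rw [integral_prod F hF] at h2F
  simp only [F, integral_const_mul] at h2F
  linarith

lemma integrable_mul_integral_div_add (hpos : ∀ᵐ x ∂μ, 0 < x) (hf : Integrable f μ) :
    Integrable (fun x => x * f x * ∫ y, f y / (x + y) ∂μ) μ := by
  simpa only [integral_const_mul] using (integrable_mul_div_add_prod hpos hf).integral_prod_left

end Symmetrization

lemma abs_mul_log_one_add_inv_le_one {x : ℝ} (hx : 0 < x) : |x * Real.log (1 + 1 / x)| ≤ 1 := by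
  have hlog : Real.log (1 + 1 / x) ≤ 1 / x := by
    linarith [Real.log_le_sub_one_of_pos (show 0 < 1 + 1 / x by positivity)]
  rw [abs_of_nonneg (mul_nonneg hx.le (Real.log_nonneg (le_add_of_nonneg_right (by positivity))))]
  calc x * Real.log (1 + 1 / x) ≤ x * (1 / x) := by gcongr
    _ = 1 := by field_simp

theorem M_zeroth_moment_quadratic_general (U ω₀ : ℝ)
    (M : ℝ → ℝ) (hMint : MeasureTheory.IntegrableOn M (Set.Ioc 0 1))
    (hMeq : ∀ μ ∈ Set.Ioc (0:ℝ) 1,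
      M μ = 1 + 2 * U * M μ * μ * Real.log (1 + 1/μ)
        + (ω₀/2) * μ * M μ * ∫ μ' in (0:ℝ)..1, M μ' / (μ + μ'))
    (R A₀ : ℝ)
    (hR : R = 1 + 2 * U * ∫ μ in (0:ℝ)..1, M μ * μ * Real.log (1 + 1/μ))
    (hA : A₀ = ∫ μ in (0:ℝ)..1, M μ) :
    (ω₀/4) * A₀^2 - A₀ + R = 0 := by
  simp only [intervalIntegral.integral_of_le zero_le_one] at hMeq hR hA
  set ν := volume.restrict (Ioc (0:ℝ) 1)
  have hmem : ∀ᵐ x ∂ν, x ∈ Ioc (0:ℝ) 1 := ae_restrict_mem measurableSet_Ioc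
  have hpos : ∀ᵐ x ∂ν, 0 < x := hmem.mono fun x hx => hx.1
  have hL : Integrable (fun x => M x * x * Real.log (1 + 1 / x)) ν := by
    simpa only [mul_assoc] using
      hMint.mul_bdd (by fun_prop) (hpos.mono fun x hx => abs_mul_log_one_add_inv_le_one hx)
  have hG := integrable_mul_integral_div_add hpos hMint
  have hint : ∫ x, M x ∂ν = ∫ x, (1 + 2 * U * (M x * x * Real.log (1 + 1 / x))
      + ω₀ / 2 * (x * M x * ∫ y, M y / (x + y) ∂ν)) ∂ν :=
    integral_congr_ae (hmem.mono fun x hx => by rw [hMeq x hx]; ring)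
  have hone : ∫ _, (1 : ℝ) ∂ν = 1 := by simp [ν]
  rw [integral_add (f := fun x => 1 + 2 * U * (M x * x * Real.log (1 + 1 / x)))
      ((integrable_const 1).add (hL.const_mul _)) (hG.const_mul _),
    integral_add (integrable_const 1) (hL.const_mul _), integral_const_mul, integral_const_mul,
    integral_mul_integral_div_add_eq_sq_div_two hpos hMint, hone] at hint
  rw [hR, hA]
  linarith

theorem M_zeroth_moment_quadratic (U ω₀ : ℝ) (hU : 0 ≤ U) (hω : 0 ≤ ω₀)
    (M : ℝ → ℝ) (hMint : MeasureTheory.IntegrableOn M (Set.Ioc 0 1))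
    (hMpos : ∀ μ ∈ Set.Ioc (0:ℝ) 1, 0 ≤ M μ)
    (hMeq : ∀ μ ∈ Set.Ioc (0:ℝ) 1,
      M μ = 1 + 2 * U * M μ * μ * Real.log (1 + 1/μ)
        + (ω₀/2) * μ * M μ * ∫ μ' in (0:ℝ)..1, M μ' / (μ + μ'))
    (R A₀ : ℝ)
    (hR : R = 1 + 2 * U * ∫ μ in (0:ℝ)..1, M μ * μ * Real.log (1 + 1/μ))
    (hA : A₀ = ∫ μ in (0:ℝ)..1, M μ) :
    (ω₀/4) * A₀^2 - A₀ + R = 0 :=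
  M_zeroth_moment_quadratic_general U ω₀ M hMint hMeq R A₀ hR hA
end

section
/- Suppose M : (0,1] → ℝ satisfies the M-function equation M(μ) = 1 + 2U·M(μ)·μ·log(1+1/μ) + (ω₀/2)·μ·M(μ)·∫₀¹ M(μ')/(μ+μ') dμ' with M integrable, and let s = √(1 − ω₀R) where R = 1 + 2U·∫₀¹ M(μ')μ' log(1+1/μ') dμ' and (ω₀/2)∫₀¹ M = 1 − s. Then for every μ ∈ (0,1] with M(μ) ≠ 0: 1/M(μ) = (ω₀/2)·∫₀¹ (μ'/(μ+μ'))·M(μ') dμ' + s − 2U·μ·log(1+1/μ). -/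
/-!
Dividing the defining equation by `M μ` gives
`1 / M μ = 1 - 2 U μ log (1 + 1/μ) - (ω₀/2) μ ∫ M μ' / (μ + μ')`.
Since `μ' / (μ + μ') = 1 - μ / (μ + μ')`, the integral in the claim equals
`∫ M - μ ∫ M μ' / (μ + μ')`, and the zeroth moment `(ω₀/2) ∫ M = 1 - s` turns the
constant term `1` into `(ω₀/2) ∫ M + s`.
-/

open MeasureTheory Set

section

variable {f : ℝ → ℝ} {a b c : ℝ} {ν : Measure ℝ}

lemma IntervalIntegrable.div_const_add (hf : IntervalIntegrable f ν a b)
    (hc : ∀ x ∈ uIcc a b, c + x ≠ 0) :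
    IntervalIntegrable (fun x => f x / (c + x)) ν a b := by
  have hcont : ContinuousOn (fun x => (c + x)⁻¹) (uIcc a b) :=
    (continuousOn_const.add continuousOn_id).inv₀ hc
  simpa only [div_eq_inv_mul] using hf.continuousOn_mul hcont

lemma intervalIntegral.integral_div_const_add_mul (hf : IntervalIntegrable f ν a b)
    (hc : ∀ x ∈ uIcc a b, c + x ≠ 0) :
    ∫ x in a..b, x / (c + x) * f x ∂ν
      = (∫ x in a..b, f x ∂ν) - c * ∫ x in a..b, f x / (c + x) ∂ν := by
  have hsplit : EqOn (fun x => x / (c + x) * f x) (fun x => f x - c * (f x / (c + x)))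
      (uIcc a b) := fun x hx => by
    field_simp [hc x hx]
    ring
  rw [intervalIntegral.integral_congr hsplit,
    intervalIntegral.integral_sub hf ((hf.div_const_add hc).const_mul c),
    intervalIntegral.integral_const_mul]

end

theorem alternative_integral_equation_general (U ω₀ : ℝ) (M : ℝ → ℝ)
    (hMint : MeasureTheory.IntegrableOn M (Set.Ioc 0 1))
    (hMeq : ∀ μ ∈ Set.Ioc (0:ℝ) 1,
      M μ = 1 + 2 * U * M μ * μ * Real.log (1 + 1/μ)
        + (ω₀/2) * μ * M μ * ∫ μ' in (0:ℝ)..1, M μ' / (μ + μ'))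
    (s : ℝ)
    (hmom : (ω₀/2) * ∫ μ in (0:ℝ)..1, M μ = 1 - s) :
    ∀ μ ∈ Set.Ioc (0:ℝ) 1, M μ ≠ 0 →
      1 / M μ = (ω₀/2) * (∫ μ' in (0:ℝ)..1, (μ' / (μ + μ')) * M μ')
        + s - 2 * U * μ * Real.log (1 + 1/μ) := by
  intro μ hμ hM
  have hrecip : 1 / M μ = 1 - 2 * U * μ * Real.log (1 + 1/μ)
      - (ω₀/2) * μ * ∫ μ' in (0:ℝ)..1, M μ' / (μ + μ') := by
    rw [div_eq_iff hM]
    linear_combination -hMeq μ hμ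
  have hM01 : IntervalIntegrable M volume 0 1 :=
    (intervalIntegrable_iff_integrableOn_Ioc_of_le zero_le_one).2 hMint
  have hpos : ∀ x ∈ uIcc (0:ℝ) 1, μ + x ≠ 0 := fun x hx => by
    rw [uIcc_of_le zero_le_one] at hx
    linarith [hμ.1, hx.1]
  rw [intervalIntegral.integral_div_const_add_mul hM01 hpos]
  linear_combination hrecip - hmom

theorem alternative_integral_equation (U ω₀ : ℝ) (M : ℝ → ℝ)
    (hMint : MeasureTheory.IntegrableOn M (Set.Ioc 0 1))
    (hMeq : ∀ μ ∈ Set.Ioc (0:ℝ) 1,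
      M μ = 1 + 2 * U * M μ * μ * Real.log (1 + 1/μ)
        + (ω₀/2) * μ * M μ * ∫ μ' in (0:ℝ)..1, M μ' / (μ + μ'))
    (R s : ℝ)
    (hR : R = 1 + 2 * U * ∫ μ' in (0:ℝ)..1, M μ' * μ' * Real.log (1 + 1/μ'))
    (hs : s = Real.sqrt (1 - ω₀ * R))
    (hmom : (ω₀/2) * ∫ μ in (0:ℝ)..1, M μ = 1 - s) :
    ∀ μ ∈ Set.Ioc (0:ℝ) 1, M μ ≠ 0 →
      1 / M μ = (ω₀/2) * (∫ μ' in (0:ℝ)..1, (μ' / (μ + μ')) * M μ')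
        + s - 2 * U * μ * Real.log (1 + 1/μ) :=
  alternative_integral_equation_general U ω₀ M hMint hMeq s hmom
end
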